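/- arXiv:1503.04867 — 2 statements merged into one kernel-verified Lean document; each statement's English description precedes it below -/
import Mathlib

section
/- Assume the lens setting, and let π : M → ℝ be constant-boundary for the lens. Then for every index i there exists a continuous function π* : M → ℝ such that π* agrees with π on the support D i, π* is constant on every connected component of M \ D i (π* is a flat extension of π over D i), and π* is itself constant-boundary for the lens, i.e. constant on the frontier of C k for every index k. -/
/-!
Fix `i` and let `C t` run over the inclusion-maximal pieces with `t > i` that meet `C i`; by
nestedness they are pairwise disjoint subsets of `C i`, and `C i` is covered by `D i` and these
pieces. Let `π*` be `π` on `C i`, except that it is the boundary value of `π` on each `C t`, and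
the boundary value of `C i` outside `C i`. Gluing along these finitely many closed sets shows that
`π*` is continuous and equals `π` on `D i`. Off `D i` it only takes the finitely many boundary
values, so it is constant on connected components there. On `frontier (C k)` either `C k` lies in
some `C t`, or `frontier (C k)` misses `C i`, or `C i ⊆ C k` and `π*` agrees with `π` up to
boundary values that coincide with that of `C k`.
-/

open Set Topology Function

theorem IsPreconnected.image_subsingleton_of_finite {X Y : Type*} [TopologicalSpace X]
    [TopologicalSpace Y] [T1Space Y] {s : Set X} {f : X → Y} (hs : IsPreconnected s)
    (hf : ContinuousOn f s) (hfin : (f '' s).Finite) : (f '' s).Subsingleton :=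
  not_nontrivial_iff.mp fun hnt => (hs.image f hf).infinite_of_nontrivial hnt hfin

theorem notMem_interior_of_mem_frontier {X : Type*} [TopologicalSpace X] {s t : Set X}
    (hst : s ⊆ t) {x : X} (hx : x ∈ frontier t) : x ∉ interior s := fun hxs =>
  (mem_frontier_iff_notMem_interior (hst (interior_subset hxs))).mp hx (interior_mono hst hxs)

section Flatten

variable {X Y κ : Type*} {S : κ → Set X} {c : κ → Y} {f : X → Y} {x : X}

open Classical in
/-- The choice of `j` is immaterial only when the `S j` are pairwise disjoint. -/
noncomputable def flattenOn (S : κ → Set X) (c : κ → Y) (f : X → Y) (x : X) : Y :=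
  if h : ∃ j, x ∈ S j then c h.choose else f x

theorem flattenOn_of_mem (hdisj : Pairwise (Disjoint on S)) {j : κ} (hx : x ∈ S j) :
    flattenOn S c f x = c j := by
  have h : ∃ j, x ∈ S j := ⟨j, hx⟩
  rw [flattenOn, dif_pos h]
  by_contra hne
  exact disjoint_left.mp (hdisj fun heq => hne (congrArg c heq)) h.choose_spec hx

theorem flattenOn_of_forall_notMem (hx : ∀ j, x ∉ S j) : flattenOn S c f x = f x :=
  dif_neg (not_exists.mpr hx)

variable [TopologicalSpace X]

theorem flattenOn_of_forall_notMem_interior (hdisj : Pairwise (Disjoint on S))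
    (hc : ∀ j, ∀ x ∈ frontier (S j), f x = c j)
    (hx : ∀ j, x ∉ interior (S j)) : flattenOn S c f x = f x := by
  by_cases h : ∃ j, x ∈ S j
  · obtain ⟨j, hj⟩ := h
    rw [flattenOn_of_mem hdisj hj, hc j x ((mem_frontier_iff_notMem_interior hj).mpr (hx j))]
  · exact flattenOn_of_forall_notMem (not_exists.mp h)

theorem continuous_flattenOn [TopologicalSpace Y] [Finite κ] (hS : ∀ j, IsClosed (S j))
    (hdisj : Pairwise (Disjoint on S)) (hf : Continuous f)
    (hc : ∀ j, ∀ x ∈ frontier (S j), f x = c j) : Continuous (flattenOn S c f) := by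
  refine (locallyFinite_of_finite (Option.elim' (closure (⋃ j, S j)ᶜ) S)).continuous ?_ ?_ ?_
  · refine eq_univ_of_forall fun x => ?_
    by_cases hx : x ∈ ⋃ j, S j
    · obtain ⟨j, hj⟩ := mem_iUnion.mp hx
      exact mem_iUnion.mpr ⟨some j, hj⟩
    · exact mem_iUnion.mpr ⟨none, subset_closure hx⟩
  · rintro (_ | j)
    exacts [isClosed_closure, hS j]
  · rintro (_ | j)
    · refine hf.continuousOn.congr fun x hx =>
        flattenOn_of_forall_notMem_interior hdisj hc fun j hj => ?_
      rw [Option.elim'_none, closure_compl] at hx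
      exact hx (interior_mono (subset_iUnion S j) hj)
    · exact continuousOn_const.congr fun x hx => flattenOn_of_mem hdisj hx

end Flatten

section Nested

variable {X ι : Type*} [LinearOrder ι] {C : ι → Set X} {i j : ι}

def IsNested (C : ι → Set X) : Prop :=
  ∀ i j, i < j → C j ⊂ C i ∨ C i ∩ C j = ∅

theorem IsNested.ssubset_of_lt (hC : IsNested C) (hij : i < j) (hne : (C i ∩ C j).Nonempty) :
    C j ⊂ C i :=
  (hC i j hij).resolve_right hne.ne_empty

theorem IsNested.subset_or_subset (hC : IsNested C) (hne : (C i ∩ C j).Nonempty) :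
    C i ⊆ C j ∨ C j ⊆ C i := by
  rcases lt_trichotomy i j with hij | rfl | hij
  · exact Or.inr (hC.ssubset_of_lt hij hne).subset
  · exact Or.inl subset_rfl
  · exact Or.inl (hC.ssubset_of_lt hij (inter_comm (C i) (C j) ▸ hne)).subset

def piecesAbove (C : ι → Set X) (i : ι) : Set ι :=
  {j | i < j ∧ (C i ∩ C j).Nonempty}

def outerPiecesAbove (C : ι → Set X) (i : ι) : Set ι :=
  {j | MaximalFor (· ∈ piecesAbove C i) C j}

theorem IsNested.subset_of_mem_piecesAbove (hC : IsNested C) (hj : j ∈ piecesAbove C i) :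
    C j ⊆ C i :=
  (hC.ssubset_of_lt hj.1 hj.2).subset

theorem exists_mem_outerPiecesAbove_subset [Finite ι] (hj : j ∈ piecesAbove C i) :
    ∃ t ∈ outerPiecesAbove C i, C j ⊆ C t := by
  obtain ⟨t, ⟨ht, hjt⟩, hmax⟩ := Set.Finite.exists_maximalFor C
    {t | t ∈ piecesAbove C i ∧ C j ⊆ C t} (toFinite _) ⟨j, hj, subset_rfl⟩
  exact ⟨t, ⟨ht, fun t' ht' htt' => hmax ⟨ht', hjt.trans htt'⟩ htt'⟩, hjt⟩

theorem IsNested.pairwise_disjoint_outerPiecesAbove (hC : IsNested C) :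
    Pairwise (Disjoint on fun t : outerPiecesAbove C i => C t) := by
  have key : ∀ t ∈ outerPiecesAbove C i, ∀ t' ∈ outerPiecesAbove C i, t < t' →
      Disjoint (C t) (C t') := by
    intro t ht t' ht' hlt
    rw [disjoint_iff_inter_eq_empty]
    by_contra hne
    have hss := hC.ssubset_of_lt hlt (nonempty_iff_ne_empty.mpr hne)
    exact hss.not_subset (ht'.2 ht.1 hss.subset)
  rintro ⟨t, ht⟩ ⟨t', ht'⟩ hne
  rcases (Subtype.coe_ne_coe.mpr hne).lt_or_gt with hlt | hlt
  exacts [key t ht t' ht' hlt, (key t' ht' t ht hlt).symm]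

open Classical in
/-- `c k` stands for the value of `π` on `frontier (C k)`. -/
noncomputable def flatExtension {Y : Type*} (C : ι → Set X) (i : ι) (c : ι → Y) (π : X → Y)
    (x : X) : Y :=
  if x ∈ C i then flattenOn (fun t : outerPiecesAbove C i => C t) (fun t => c t) π x else c i

variable {Y : Type*} {c : ι → Y} {π : X → Y}

theorem flatExtension_of_notMem {x : X} (hx : x ∉ C i) : flatExtension C i c π x = c i :=
  if_neg hx

theorem flatExtension_of_mem_outerPiecesAbove (hC : IsNested C) {t : ι}
    (ht : t ∈ outerPiecesAbove C i) {x : X} (hx : x ∈ C t) : flatExtension C i c π x = c t := by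
  rw [flatExtension, if_pos (hC.subset_of_mem_piecesAbove ht.1 hx)]
  exact flattenOn_of_mem (S := fun t : outerPiecesAbove C i => C t)
    hC.pairwise_disjoint_outerPiecesAbove (j := ⟨t, ht⟩) hx

end Nested

section Lens

variable {X Y ι : Type*} [TopologicalSpace X] [LinearOrder ι] {C : ι → Set X} {i : ι}
  {c : ι → Y} {π : X → Y}

def lensSupport (C : ι → Set X) (i : ι) : Set X :=
  closure (C i \ ⋃ j > i, C j)

theorem lensSupport_subset (hCi : IsClosed (C i)) : lensSupport C i ⊆ C i :=
  closure_minimal sdiff_subset hCi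

theorem disjoint_lensSupport_interior {j : ι} (hij : i < j) :
    Disjoint (lensSupport C i) (interior (C j)) := by
  refine disjoint_left.mpr fun x hx hxj => ?_
  obtain ⟨y, hyj, hy⟩ := mem_closure_iff.mp hx _ isOpen_interior hxj
  exact hy.2 (mem_iUnion₂.mpr ⟨j, hij, interior_subset hyj⟩)

theorem exists_mem_piecesAbove_of_notMem_lensSupport {x : X} (hx : x ∈ C i)
    (hxD : x ∉ lensSupport C i) : ∃ j ∈ piecesAbove C i, x ∈ C j := by
  by_contra! h
  refine hxD (subset_closure ⟨hx, fun hxU => ?_⟩)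
  obtain ⟨j, hij, hxj⟩ := mem_iUnion₂.mp hxU
  exact h j ⟨hij, x, hx, hxj⟩ hxj

theorem flatExtension_of_forall_notMem_interior (hC : IsNested C)
    (hc : ∀ k, ∀ x ∈ frontier (C k), π x = c k) {x : X} (hx : x ∈ C i)
    (hxt : ∀ t ∈ outerPiecesAbove C i, x ∉ interior (C t)) : flatExtension C i c π x = π x := by
  rw [flatExtension, if_pos hx]
  exact flattenOn_of_forall_notMem_interior hC.pairwise_disjoint_outerPiecesAbove
    (fun t => hc t) fun t => hxt t t.2

theorem flatExtension_of_mem_lensSupport (hclosed : ∀ k, IsClosed (C k)) (hC : IsNested C)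
    (hc : ∀ k, ∀ x ∈ frontier (C k), π x = c k) {x : X} (hx : x ∈ lensSupport C i) :
    flatExtension C i c π x = π x :=
  flatExtension_of_forall_notMem_interior hC hc (lensSupport_subset (hclosed i) hx)
    fun _ ht => disjoint_left.mp (disjoint_lensSupport_interior ht.1.1) hx

theorem flatExtension_mem_range_of_notMem_lensSupport [Finite ι] (hC : IsNested C) {x : X}
    (hx : x ∉ lensSupport C i) : flatExtension C i c π x ∈ range c := by
  by_cases hxi : x ∈ C i
  · obtain ⟨j, hj, hxj⟩ := exists_mem_piecesAbove_of_notMem_lensSupport hxi hx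
    obtain ⟨t, ht, hjt⟩ := exists_mem_outerPiecesAbove_subset hj
    exact ⟨t, (flatExtension_of_mem_outerPiecesAbove hC ht (hjt hxj)).symm⟩
  · exact ⟨i, (flatExtension_of_notMem hxi).symm⟩

theorem flatExtension_eq_of_mem_frontier (hclosed : ∀ k, IsClosed (C k))
    (hC : IsNested C) (hc : ∀ k, ∀ x ∈ frontier (C k), π x = c k) {k : ι}
    (hcik : c i = c k) (hk : ∀ t ∈ outerPiecesAbove C i, ¬C k ⊆ C t) {z : X}
    (hz : z ∈ frontier (C k)) : flatExtension C i c π z = c k := by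
  by_cases hzi : z ∈ C i
  · rw [flatExtension_of_forall_notMem_interior hC hc hzi, hc k z hz]
    intro t ht hzt
    have htk : C t ⊆ C k := (hC.subset_or_subset
      ⟨z, interior_subset hzt, (hclosed k).frontier_subset hz⟩).resolve_right (hk t ht)
    exact notMem_interior_of_mem_frontier htk hz hzt
  · rw [flatExtension_of_notMem hzi, hcik]

theorem exists_flatExtension_eq_of_mem_frontier [Finite ι] (hclosed : ∀ k, IsClosed (C k))
    (hC : IsNested C) (hc : ∀ k, ∀ x ∈ frontier (C k), π x = c k) (k : ι) :
    ∃ v, ∀ z ∈ frontier (C k), flatExtension C i c π z = v := by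
  by_cases hout : ∃ t ∈ outerPiecesAbove C i, C k ⊆ C t
  · obtain ⟨t, ht, hkt⟩ := hout
    exact ⟨c t, fun z hz =>
      flatExtension_of_mem_outerPiecesAbove hC ht (hkt ((hclosed k).frontier_subset hz))⟩
  push Not at hout
  by_cases hmeet : ∃ x ∈ frontier (C k), x ∈ C i
  · obtain ⟨x, hxk, hxi⟩ := hmeet
    have hxCk := (hclosed k).frontier_subset hxk
    have hik : C i ⊆ C k := by
      rcases lt_trichotomy k i with hki | rfl | hik
      · exact (hC.ssubset_of_lt hki ⟨x, hxCk, hxi⟩).subset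
      · exact subset_rfl
      · obtain ⟨t, ht, hkt⟩ := exists_mem_outerPiecesAbove_subset ⟨hik, x, hxi, hxCk⟩
        exact absurd hkt (hout t ht)
    have hxfr : x ∈ frontier (C i) :=
      (mem_frontier_iff_notMem_interior hxi).mpr (notMem_interior_of_mem_frontier hik hxk)
    exact ⟨c k, fun z hz => flatExtension_eq_of_mem_frontier hclosed hC hc
      ((hc i x hxfr).symm.trans (hc k x hxk)) hout hz⟩
  · push Not at hmeet
    exact ⟨c i, fun z hz => flatExtension_of_notMem (hmeet z hz)⟩

variable [TopologicalSpace Y]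

theorem continuous_flatExtension [Finite ι] (hclosed : ∀ k, IsClosed (C k)) (hC : IsNested C)
    (hπ : Continuous π) (hc : ∀ k, ∀ x ∈ frontier (C k), π x = c k) :
    Continuous (flatExtension C i c π) := by
  classical
  refine Continuous.if (fun x hx => ?_) (continuous_flattenOn (fun t => hclosed t)
    hC.pairwise_disjoint_outerPiecesAbove hπ fun t => hc t) continuous_const
  rw [← hc i x hx]
  exact flattenOn_of_forall_notMem_interior hC.pairwise_disjoint_outerPiecesAbove
    (fun t => hc t) fun t => notMem_interior_of_mem_frontier (hC.subset_of_mem_piecesAbove t.2.1) hx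

theorem flatExtension_eq_of_mem_connectedComponentIn [Finite ι] [T1Space Y]
    (hclosed : ∀ k, IsClosed (C k)) (hC : IsNested C) (hπ : Continuous π)
    (hc : ∀ k, ∀ x ∈ frontier (C k), π x = c k) {x y : X} (hx : x ∉ lensSupport C i)
    (hy : y ∈ connectedComponentIn (lensSupport C i)ᶜ x) :
    flatExtension C i c π y = flatExtension C i c π x := by
  have hfin : (flatExtension C i c π '' connectedComponentIn (lensSupport C i)ᶜ x).Finite :=
    (finite_range c).subset <| image_subset_iff.mpr fun z hz =>
      flatExtension_mem_range_of_notMem_lensSupport hC (connectedComponentIn_subset _ _ hz)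
  exact isPreconnected_connectedComponentIn.image_subsingleton_of_finite
    (continuous_flatExtension hclosed hC hπ hc).continuousOn hfin (mem_image_of_mem _ hy)
    (mem_image_of_mem _ (mem_connectedComponentIn hx))

end Lens

theorem flat_extension_exists_general {M : Type*} [MetricSpace M]
    {ι : Type*} [Fintype ι] [LinearOrder ι]
    (C : ι → Set M)
    (hclosed : ∀ i, IsClosed (C i))
    (hnest : ∀ i j, i < j → C j ⊂ C i ∨ C i ∩ C j = ∅)
    (D : ι → Set M)
    (hD : ∀ i, D i = closure (C i \ ⋃ j > i, C j))
    (π : M → ℝ) (hπc : Continuous π)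
    (hπcb : ∀ k, ∀ x ∈ frontier (C k), ∀ y ∈ frontier (C k), π x = π y) :
    ∀ i, ∃ πs : M → ℝ, Continuous πs ∧
      (∀ x ∈ D i, πs x = π x) ∧
      (∀ x ∈ (D i)ᶜ, ∀ y ∈ connectedComponentIn (D i)ᶜ x, πs y = πs x) ∧
      (∀ k, ∀ x ∈ frontier (C k), ∀ y ∈ frontier (C k), πs x = πs y) := by
  obtain rfl : D = lensSupport C := funext hD
  have hboundary : ∀ k, ∃ v : ℝ, ∀ x ∈ frontier (C k), π x = v := by
    intro k
    rcases (frontier (C k)).eq_empty_or_nonempty with hempty | ⟨x₀, hx₀⟩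
    · exact ⟨0, by simp [hempty]⟩
    · exact ⟨π x₀, fun x hx => hπcb k x hx x₀ hx₀⟩
  choose c hc using hboundary
  intro i
  refine ⟨flatExtension C i c π, continuous_flatExtension hclosed hnest hπc hc,
    fun x => flatExtension_of_mem_lensSupport hclosed hnest hc,
    fun x hx y => flatExtension_eq_of_mem_connectedComponentIn hclosed hnest hπc hc hx,
    fun k x hx y hy => ?_⟩
  obtain ⟨v, hv⟩ := exists_flatExtension_eq_of_mem_frontier hclosed hnest hc (i := i) k
  rw [hv x hx, hv y hy]

/-- Flat Extension Lemma, existence + constant-boundary.  Given a lens `C` on a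
compact metric space `M` with supports `D i = closure (C i \ ⋃ j > i, C j)`, and
a continuous `π : M → ℝ` constant on every `frontier (C k)`, then for every
index `i` there is a continuous `πs : M → ℝ` agreeing with `π` on `D i`,
constant on every connected component of `M \ D i`, and constant on every
`frontier (C k)`. -/
theorem flat_extension_exists {M : Type*} [MetricSpace M] [CompactSpace M]
    {ι : Type*} [Fintype ι] [LinearOrder ι]
    (C : ι → Set M)
    (hclosed : ∀ i, IsClosed (C i))
    (hconn : ∀ i, IsConnected (C i))
    (hint : ∀ i, (interior (C i)).Nonempty)
    (hnest : ∀ i j, i < j → C j ⊂ C i ∨ C i ∩ C j = ∅)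
    (hcover : ⋃ i, C i = Set.univ)
    (D : ι → Set M)
    (hD : ∀ i, D i = closure (C i \ ⋃ j > i, C j))
    (π : M → ℝ) (hπc : Continuous π)
    (hπcb : ∀ k, ∀ x ∈ frontier (C k), ∀ y ∈ frontier (C k), π x = π y) :
    ∀ i, ∃ πs : M → ℝ, Continuous πs ∧
      (∀ x ∈ D i, πs x = π x) ∧
      (∀ x ∈ (D i)ᶜ, ∀ y ∈ connectedComponentIn (D i)ᶜ x, πs y = πs x) ∧
      (∀ k, ∀ x ∈ frontier (C k), ∀ y ∈ frontier (C k), πs x = πs y) :=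
  flat_extension_exists_general C hclosed hnest D hD π hπc hπcb
end

section
/- Let M be a connected compact metric space, let D ⊆ M be a nonempty closed subset, and let g : M → ℝ be a continuous function that is constant on every connected component of M \ D. Then the image of g equals the image of its restriction to D, i.e. g(M) = g(D). -/
/-!
If `x ∉ D`, the closure of the component `C` of `x` in `Dᶜ` meets `D` ("boundary bumping"), and
by continuity `g` takes the value `g x` at such a point. Boundary bumping holds because otherwise
`C` is closed, so it has a compact neighbourhood `K ⊆ Dᶜ`; the component of `x` in `K` is `C`,
and in the compact Hausdorff space `K` a component is the intersection of its clopen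
neighbourhoods, so some clopen subset of `K` around `x` avoids the frontier of `K`. That set is
clopen in the whole space, which is impossible in a connected space unless `D` is empty.
-/

open Set

theorem exists_isClopen_mem_subset_of_connectedComponent_subset {X : Type*} [TopologicalSpace X]
    [T2Space X] [CompactSpace X] {x : X} {U : Set X} (hU : IsOpen U)
    (hxU : connectedComponent x ⊆ U) : ∃ S, IsClopen S ∧ x ∈ S ∧ S ⊆ U := by
  rw [connectedComponent_eq_iInter_isClopen] at hxU
  obtain ⟨t, ht⟩ := hU.isClosed_compl.isCompact.elim_finite_subfamily_closed
    (fun s : {s : Set X // IsClopen s ∧ x ∈ s} ↦ (s : Set X)) (fun s ↦ s.2.1.1)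
    (by rwa [← disjoint_iff_inter_eq_empty, disjoint_compl_left_iff_subset])
  refine ⟨⋂ s ∈ t, s, isClopen_biInter_finset fun s _ ↦ s.2.1,
    mem_iInter₂.2 fun s _ ↦ s.2.2, ?_⟩
  rwa [← disjoint_compl_left_iff_subset, disjoint_iff_inter_eq_empty]

-- `↑S` is the open set `interior K` minus the closed set `↑Sᶜ`.
theorem IsClopen.image_val_of_subset_interior {X : Type*} [TopologicalSpace X] {K : Set X}
    {S : Set K} (hS : IsClopen S) (hK : IsClosed K) (hSK : (↑) '' S ⊆ interior K) :
    IsClopen ((↑) '' S : Set X) := by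
  have hclosedMap : IsClosedMap ((↑) : K → X) := hK.isClosedEmbedding_subtypeVal.isClosedMap
  have hS_eq : (↑) '' S = interior K \ (↑) '' Sᶜ := by
    rw [image_val_compl]
    exact Subset.antisymm (fun y hy ↦ ⟨hSK hy, fun h ↦ h.2 hy⟩)
      fun y hy ↦ by_contra fun h ↦ hy.2 ⟨interior_subset hy.1, h⟩
  exact ⟨hclosedMap _ hS.1, hS_eq ▸ isOpen_interior.sdiff (hclosedMap _ hS.compl.1)⟩

theorem closure_connectedComponentIn_compl_inter_nonempty {X : Type*} [TopologicalSpace X]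
    [T2Space X] [CompactSpace X] [PreconnectedSpace X] {F : Set X} (hF : IsClosed F)
    (hFne : F.Nonempty) {x : X} (hx : x ∉ F) :
    (closure (connectedComponentIn Fᶜ x) ∩ F).Nonempty := by
  set C := connectedComponentIn Fᶜ x
  by_contra hCF
  rw [not_nonempty_iff_eq_empty, ← disjoint_iff_inter_eq_empty, ← subset_compl_iff_disjoint_right]
    at hCF
  have hxC : x ∈ C := mem_connectedComponentIn hx
  have hC : IsClosed C := isClosed_of_closure_subset <|
    isPreconnected_connectedComponentIn.closure.subset_connectedComponentIn
      (subset_closure hxC) hCF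
  obtain ⟨V, hV, hCV, hVF⟩ :=
    normal_exists_closure_subset hC hF.isOpen_compl (connectedComponentIn_subset _ _)
  set K := closure V
  have : CompactSpace K := isCompact_iff_compactSpace.1 isClosed_closure.isCompact
  have hxK : x ∈ K := subset_closure (hCV hxC)
  obtain ⟨S, hS, hxS, hSV⟩ : ∃ S : Set K, IsClopen S ∧ ⟨x, hxK⟩ ∈ S ∧ S ⊆ (↑) ⁻¹' V := by
    refine exists_isClopen_mem_subset_of_connectedComponent_subset
      (hV.preimage continuous_subtype_val) ?_
    rw [← image_subset_iff, ← connectedComponentIn_eq_image hxK]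
    exact (isPreconnected_connectedComponentIn.subset_connectedComponentIn
      (mem_connectedComponentIn hxK) ((connectedComponentIn_subset _ _).trans hVF)).trans hCV
  have hSX : IsClopen ((↑) '' S : Set X) :=
    hS.image_val_of_subset_interior isClosed_closure <| image_subset_iff.2 <|
      hSV.trans <| preimage_mono <| hV.subset_interior_iff.2 subset_closure
  obtain hempty | huniv := isClopen_iff.1 hSX
  · exact (image_nonempty.2 ⟨_, hxS⟩).ne_empty hempty
  · obtain ⟨y, hy⟩ := hFne
    obtain ⟨z, hzS, rfl⟩ := huniv ▸ mem_univ y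
    exact hVF (subset_closure (hSV hzS)) hy

/-- A continuous function on a connected compact metric space that is constant
on every connected component of the complement of a nonempty closed set `D`
attains all of its values on `D`: `g(M) = g(D)`. -/
theorem flat_extension_image {M : Type*} [MetricSpace M] [CompactSpace M] [ConnectedSpace M]
    (D : Set M) (hDne : D.Nonempty) (hDclosed : IsClosed D)
    (g : M → ℝ) (hg : Continuous g)
    (hconst : ∀ x ∈ Dᶜ, ∀ y ∈ connectedComponentIn Dᶜ x, g y = g x) :
    g '' Set.univ = g '' D := by
  refine (image_mono (subset_univ D)).antisymm' ?_
  rintro _ ⟨x, -, rfl⟩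
  by_cases hx : x ∈ D
  · exact ⟨x, hx, rfl⟩
  obtain ⟨z, hzC, hzD⟩ := closure_connectedComponentIn_compl_inter_nonempty hDclosed hDne hx
  have hg_closure : EqOn g (fun _ ↦ g x) (closure (connectedComponentIn Dᶜ x)) :=
    EqOn.closure (hconst x hx) hg continuous_const
  exact ⟨z, hzD, hg_closure hzC⟩
end
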